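/- arXiv:2605.26838 — 3 statements merged into one kernel-verified Lean document; each statement's English description precedes it below -/
import Mathlib

section
/- Let (A_k)_{k∈ℕ} be a process of nonnegative integrable random variables adapted to the filtration (ℱ_k)_{k∈ℕ}, let Θ > 0, and let T₀ = inf{k ≥ 0 : A_k = 0}. Assume that on {A_k = 0} one has A_{k+1} = 0 almost surely, that 𝔼[A_{k+1} − A_k | ℱ_k] ≤ −Θ almost everywhere on {A_k > 0} for every k, and that |A_{k+1} − A_k| ≤ C almost surely for a constant C < ∞. Then for every k ∈ ℕ, 𝔼[min(k, T₀)] ≤ 𝔼[A₀]/Θ. -/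
open MeasureTheory Finset

/-!
On `{A_k > 0}` the drift condition gives `𝔼[A_{k+1}] ≤ 𝔼[A_k] - Θ ℙ(A_k > 0)`, while on
`{A_k = 0}` absorption makes the increment vanish. Summing and telescoping,
`Θ ∑_{j<k} ℙ(A_j > 0) ≤ 𝔼[A_0] - 𝔼[A_k] ≤ 𝔼[A_0]`. Since zero is absorbing, `j < T₀` holds exactly
when `A_j > 0`, so `min(k, T₀) = ∑_{j<k} 1{A_j > 0}` and the left-hand side is `Θ 𝔼[min(k, T₀)]`.
-/

theorem lt_sInf_image_natCast_iff {P : ℕ → Prop} (hP : Monotone P) (j : ℕ) :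
    (j : ℕ∞) < sInf ((fun k : ℕ => (k : ℕ∞)) '' {k | P k}) ↔ ¬ P j := by
  refine ⟨fun hlt hj => (sInf_le (Set.mem_image_of_mem _ hj)).not_gt hlt, fun hj => ?_⟩
  refine (ENat.add_one_le_iff (ENat.natCast_ne_top j)).mp (le_sInf ?_)
  rintro _ ⟨m, hm, rfl⟩
  have : j + 1 ≤ m := lt_of_not_ge fun hmj => hj (hP hmj hm)
  exact Nat.cast_le.mpr this

theorem ENat.toNat_min_natCast_eq_card (k : ℕ) (T : ℕ∞) :
    (min (k : ℕ∞) T).toNat = #((range k).filter fun j : ℕ => (j : ℕ∞) < T) := by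
  induction T using ENat.recTopCoe with
  | top => simp
  | coe n =>
    have : (range k).filter (fun j : ℕ => (j : ℕ∞) < n) = range (min k n) := by
      ext j; simp only [mem_filter, mem_range, Nat.cast_lt]; omega
    rw [this, card_range]
    norm_cast

theorem toNat_min_sInf_image_natCast_eq_card {P : ℕ → Prop} [DecidablePred P] (hP : Monotone P)
    (k : ℕ) : (min (k : ℕ∞) (sInf ((fun n : ℕ => (n : ℕ∞)) '' {n | P n}))).toNat
      = #{j ∈ range k | ¬ P j} := by
  simp only [ENat.toNat_min_natCast_eq_card, lt_sInf_image_natCast_iff hP]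

theorem mul_measureReal_pos_le_integral_sub_of_condExp_le {Ω : Type*} {m mΩ : MeasurableSpace Ω}
    {μ : Measure Ω} [IsFiniteMeasure μ] {X Y : Ω → ℝ} {Θ : ℝ} (hm : m ≤ mΩ)
    (hX : Measurable[m] X) (hXint : Integrable X μ) (hYint : Integrable Y μ)
    (hX_nonneg : 0 ≤ X) (habs : ∀ᵐ ω ∂μ, X ω = 0 → Y ω = 0)
    (hdrift : ∀ᵐ ω ∂μ, 0 < X ω → μ[fun ω => Y ω - X ω | m] ω ≤ -Θ) :
    Θ * μ.real {ω | 0 < X ω} ≤ ∫ ω, X ω ∂μ - ∫ ω, Y ω ∂μ := by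
  set s := {ω | 0 < X ω}
  have hs_m : MeasurableSet[m] s :=
    measurableSet_lt measurable_const hX
  have hs : MeasurableSet s := hm _ hs_m
  have hYX : Integrable (fun ω => Y ω - X ω) μ := hYint.sub hXint
  have hoff : ∫ ω in sᶜ, (Y ω - X ω) ∂μ = 0 := by
    refine setIntegral_eq_zero_of_ae_eq_zero ?_
    filter_upwards [habs] with ω hω hωs
    have hX0 : X ω = 0 := le_antisymm (not_lt.mp hωs) (hX_nonneg ω)
    rw [hX0, hω hX0, sub_zero]
  calc Θ * μ.real s = -∫ _ in s, -Θ ∂μ := by simp [mul_comm]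
    _ ≤ -∫ ω in s, μ[fun ω => Y ω - X ω | m] ω ∂μ := by
      refine neg_le_neg (setIntegral_mono_ae_restrict integrable_condExp.integrableOn
        (integrable_const _).integrableOn ((ae_restrict_iff' hs).mpr ?_))
      filter_upwards [hdrift] with ω hω using hω
    _ = -∫ ω, (Y ω - X ω) ∂μ := by
      rw [setIntegral_condExp hm hYX hs_m, ← integral_add_compl hs hYX, hoff, add_zero]
    _ = ∫ ω, X ω ∂μ - ∫ ω, Y ω ∂μ := by rw [integral_sub hYint hXint]; ring

theorem truncated_hitting_time_bound_general
    {Ω : Type*} {mΩ : MeasurableSpace Ω} {μ : Measure Ω} [IsProbabilityMeasure μ]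
    (ℱ : Filtration ℕ mΩ)
    (A : ℕ → Ω → ℝ)
    (hadapted : Adapted ℱ A)
    (hint : ∀ k, Integrable (A k) μ)
    (hpos : ∀ k ω, 0 ≤ A k ω)
    (T₀ : Ω → ℕ∞)
    (hT₀ : ∀ ω, T₀ ω = sInf ((fun k : ℕ => (k : ℕ∞)) '' {k : ℕ | A k ω = 0}))
    (Θ : ℝ) (hΘ : 0 < Θ)
    (habs : ∀ k, ∀ᵐ ω ∂μ, A k ω = 0 → A (k + 1) ω = 0)
    (hdrift : ∀ k, ∀ᵐ ω ∂μ, 0 < A k ω →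
      (μ[(fun ω => A (k + 1) ω - A k ω) | ℱ k]) ω ≤ -Θ) :
    ∀ k : ℕ, ∫ ω, ((min (k : ℕ∞) (T₀ ω)).toNat : ℝ) ∂μ ≤ (∫ ω, A 0 ω ∂μ) / Θ := by
  classical
  intro k
  have hmeas (j : ℕ) : MeasurableSet {ω | 0 < A j ω} :=
    measurableSet_lt measurable_const ((hadapted j).mono (ℱ.le j) le_rfl)
  have hcount : ∀ᵐ ω ∂μ, ((min (k : ℕ∞) (T₀ ω)).toNat : ℝ)
      = ∑ j ∈ range k, {ω | 0 < A j ω}.indicator 1 ω := by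
    filter_upwards [ae_all_iff.mpr habs] with ω hω
    rw [hT₀, toNat_min_sInf_image_natCast_eq_card (monotone_nat_of_le_succ hω), natCast_card_filter]
    refine sum_congr rfl fun j _ => ?_
    simp [Set.indicator_apply, (hpos j ω).lt_iff_ne']
  have hstep (j : ℕ) : Θ * μ.real {ω | 0 < A j ω} ≤ ∫ ω, A j ω ∂μ - ∫ ω, A (j + 1) ω ∂μ :=
    mul_measureReal_pos_le_integral_sub_of_condExp_le (ℱ.le j) (hadapted j) (hint j) (hint (j + 1))
      (hpos j) (habs j) (hdrift j)
  rw [integral_congr_ae hcount,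
    integral_finsetSum _ fun j _ => (integrable_const 1).indicator (hmeas j), le_div_iff₀' hΘ,
    mul_sum]
  calc ∑ j ∈ range k, Θ * ∫ ω, {ω | 0 < A j ω}.indicator 1 ω ∂μ
      = ∑ j ∈ range k, Θ * μ.real {ω | 0 < A j ω} := by
        simp only [integral_indicator_one (hmeas _)]
    _ ≤ ∑ j ∈ range k, (∫ ω, A j ω ∂μ - ∫ ω, A (j + 1) ω ∂μ) := sum_le_sum fun j _ => hstep j
    _ = ∫ ω, A 0 ω ∂μ - ∫ ω, A k ω ∂μ := sum_range_sub' _ k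
    _ ≤ ∫ ω, A 0 ω ∂μ := sub_le_self _ (integral_nonneg (hpos k))

/-- Truncated hitting-time bound: under absorption at `0`, uniform negative drift `-Θ` on
`{A_k > 0}`, and bounded increments, the truncated absorption time satisfies
`𝔼[min(k, T₀)] ≤ 𝔼[A₀] / Θ` for every `k` (with `min(k, T₀) = k` on `{T₀ = ∞}`). -/
theorem truncated_hitting_time_bound
    {Ω : Type*} {mΩ : MeasurableSpace Ω} {μ : Measure Ω} [IsProbabilityMeasure μ]
    (ℱ : Filtration ℕ mΩ)
    (A : ℕ → Ω → ℝ)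
    (hadapted : Adapted ℱ A)
    (hint : ∀ k, Integrable (A k) μ)
    (hpos : ∀ k ω, 0 ≤ A k ω)
    (T₀ : Ω → ℕ∞)
    (hT₀ : ∀ ω, T₀ ω = sInf ((fun k : ℕ => (k : ℕ∞)) '' {k : ℕ | A k ω = 0}))
    (Θ : ℝ) (hΘ : 0 < Θ)
    (habs : ∀ k, ∀ᵐ ω ∂μ, A k ω = 0 → A (k + 1) ω = 0)
    (hdrift : ∀ k, ∀ᵐ ω ∂μ, 0 < A k ω →
      (μ[(fun ω => A (k + 1) ω - A k ω) | ℱ k]) ω ≤ -Θ)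
    (C : ℝ) (hbdd : ∀ k, ∀ᵐ ω ∂μ, |A (k + 1) ω - A k ω| ≤ C) :
    ∀ k : ℕ, ∫ ω, ((min (k : ℕ∞) (T₀ ω)).toNat : ℝ) ∂μ ≤ (∫ ω, A 0 ω ∂μ) / Θ :=
  truncated_hitting_time_bound_general ℱ A hadapted hint hpos T₀ hT₀ Θ hΘ habs hdrift
end

section
/- Let (A_k)_{k∈ℕ} be a process of nonnegative integer-valued integrable random variables adapted to the filtration (ℱ_k)_{k∈ℕ}, with deterministic initial value A₀ = a ∈ ℕ. Let Θ ∈ (0, 1] be a constant and assume the multiplicative drift condition: for every k, 𝔼[A_{k+1} | ℱ_k] ≤ (1 − Θ)·A_k almost everywhere on the event {A_k > 0}; assume also that on {A_k = 0}, A_{k+1} = 0 almost surely. Define T₀ = inf{k ≥ 0 : A_k = 0}. Then 𝔼[T₀] ≤ (1 + ln(max(1, a)))/Θ. -/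
open MeasureTheory
open scoped ENNReal

/-!
Write `q = 1 - Θ` and `x = max 1 a`. Drift plus absorption at `0` give `𝔼[A_{k+1}] ≤ q 𝔼[A_k]`,
so `𝔼[A_k] ≤ x qᵏ`; as `A_k` is integer-valued, Markov gives
`ℙ(T₀ > k) ≤ ℙ(A_k ≠ 0) ≤ min 1 (x qᵏ)`. Summing these tails, the first `m` terms contribute at
most `m` and the others a geometric series `x qᵐ / Θ`. Taking `m = j + 1` where
`b = x qʲ ≥ 1 ≥ b q`, the bounds `qʲ ≤ e^{-jΘ}` and `q (b - 1) ≤ 1 - 1/b ≤ ln b` give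
`m Θ + x qᵐ ≤ 1 + ln x`.
-/

namespace Real

lemma pow_le_exp_neg_mul_one_sub {q : ℝ} (hq : 0 ≤ q) (n : ℕ) :
    q ^ n ≤ exp (-(n * (1 - q))) := by
  have h : q ≤ exp (q - 1) := by linarith [add_one_le_exp (q - 1)]
  calc q ^ n ≤ exp (q - 1) ^ n := pow_le_pow_left₀ hq h n
    _ = exp (-(n * (1 - q))) := by rw [← exp_nat_mul]; ring_nf

lemma mul_sub_one_le_log {b q : ℝ} (hb : 1 ≤ b) (hbq : b * q ≤ 1) :
    q * (b - 1) ≤ log b := by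
  have hb0 : 0 < b := by linarith
  have hqb : q ≤ b⁻¹ := by rw [← one_div, le_div_iff₀ hb0]; linarith
  calc q * (b - 1) ≤ b⁻¹ * (b - 1) := by gcongr
    _ = 1 - b⁻¹ := by field_simp
    _ ≤ log b := one_sub_inv_le_log_of_pos hb0

lemma exists_one_le_mul_pow_and_mul_pow_succ_le_one {x q : ℝ} (hx : 1 ≤ x) (hq0 : 0 ≤ q)
    (hq1 : q < 1) : ∃ j : ℕ, 1 ≤ x * q ^ j ∧ x * q ^ (j + 1) ≤ 1 := by
  classical
  have hex : ∃ n : ℕ, x * q ^ (n + 1) ≤ 1 := by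
    have hlim := (tendsto_pow_atTop_nhds_zero_of_lt_one hq0 hq1).const_mul x
    rw [mul_zero] at hlim
    obtain ⟨n, hn⟩ := (hlim.eventually (ge_mem_nhds zero_lt_one)).exists
    have hmono : x * q ^ (n + 1) ≤ x * q ^ n :=
      mul_le_mul_of_nonneg_left (pow_le_pow_of_le_one hq0 hq1.le n.le_succ) (by linarith)
    exact ⟨n, hmono.trans hn⟩
  refine ⟨Nat.find hex, ?_, Nat.find_spec hex⟩
  rcases h : Nat.find hex with _ | i
  · simpa using hx
  · exact (not_le.1 (Nat.find_min hex (by omega : i < Nat.find hex))).le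

lemma exists_mul_one_sub_add_mul_pow_le_one_add_log {x q : ℝ} (hx : 1 ≤ x) (hq0 : 0 ≤ q)
    (hq1 : q < 1) : ∃ m : ℕ, m * (1 - q) + x * q ^ m ≤ 1 + log x := by
  obtain ⟨j, hb, hbq⟩ := exists_one_le_mul_pow_and_mul_pow_succ_le_one hx hq0 hq1
  refine ⟨j + 1, ?_⟩
  have hlog : log (x * q ^ j) ≤ log x - j * (1 - q) := by
    calc log (x * q ^ j) ≤ log (x * exp (-(j * (1 - q)))) :=
          log_le_log (by linarith) (by gcongr; exact pow_le_exp_neg_mul_one_sub hq0 j)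
      _ = log x - j * (1 - q) := by rw [log_mul (by positivity) (exp_pos _).ne', log_exp]; ring
  have hstep := mul_sub_one_le_log hb (by rwa [pow_succ, ← mul_assoc] at hbq)
  rw [pow_succ]
  push_cast
  linarith

end Real

namespace ENNReal

lemma tsum_min_one_mul_pow_le (c r : ℝ≥0∞) (m : ℕ) :
    ∑' k, min 1 (c * r ^ k) ≤ m + c * r ^ m * (1 - r)⁻¹ := by
  rw [← ENNReal.summable.sum_add_tsum_nat_add' (k := m)]
  gcongr
  · calc ∑ k ∈ Finset.range m, min 1 (c * r ^ k) ≤ ∑ _k ∈ Finset.range m, 1 :=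
          Finset.sum_le_sum fun _ _ => min_le_left _ _
      _ = m := by simp
  · calc ∑' i, min 1 (c * r ^ (i + m)) ≤ ∑' i, c * r ^ m * r ^ i :=
          ENNReal.tsum_le_tsum fun i => (min_le_right _ _).trans_eq (by ring)
      _ = c * r ^ m * (1 - r)⁻¹ := by rw [ENNReal.tsum_mul_left, ENNReal.tsum_geometric]

lemma tsum_min_one_ofReal_mul_pow_le {x q : ℝ} (hx : 1 ≤ x) (hq0 : 0 ≤ q) (hq1 : q < 1) :
    ∑' k, min 1 (ENNReal.ofReal (x * q ^ k)) ≤ ENNReal.ofReal ((1 + Real.log x) / (1 - q)) := by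
  obtain ⟨m, hm⟩ := Real.exists_mul_one_sub_add_mul_pow_le_one_add_log hx hq0 hq1
  have hq : 0 < 1 - q := by linarith
  calc ∑' k, min 1 (ENNReal.ofReal (x * q ^ k))
      = ∑' k, min 1 (ENNReal.ofReal x * ENNReal.ofReal q ^ k) := by
        simp_rw [ENNReal.ofReal_mul (by linarith : 0 ≤ x), ENNReal.ofReal_pow hq0]
    _ ≤ m + ENNReal.ofReal x * ENNReal.ofReal q ^ m * (1 - ENNReal.ofReal q)⁻¹ :=
        tsum_min_one_mul_pow_le _ _ m
    _ = ENNReal.ofReal ((m * (1 - q) + x * q ^ m) / (1 - q)) := by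
        rw [add_div, mul_div_cancel_right₀ _ hq.ne', div_eq_mul_inv,
          ENNReal.ofReal_add (by positivity) (by positivity), ENNReal.ofReal_natCast,
          ENNReal.ofReal_mul (by positivity), ENNReal.ofReal_mul (by linarith),
          ENNReal.ofReal_pow hq0, ENNReal.ofReal_inv_of_pos hq, ENNReal.ofReal_sub _ hq0,
          ENNReal.ofReal_one]
    _ ≤ ENNReal.ofReal ((1 + Real.log x) / (1 - q)) := by gcongr

end ENNReal

section Drift

variable {Ω : Type*} {m mΩ : MeasurableSpace Ω} {μ : Measure Ω}

lemma condExp_le_mul_of_drift {f g : Ω → ℝ} {c : ℝ} (hm : m ≤ mΩ) (hg : Measurable[m] g)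
    (hg0 : ∀ ω, 0 ≤ g ω) (hdrift : ∀ᵐ ω ∂μ, 0 < g ω → μ[f | m] ω ≤ c * g ω)
    (habs : ∀ᵐ ω ∂μ, g ω = 0 → f ω = 0) :
    ∀ᵐ ω ∂μ, μ[f | m] ω ≤ c * g ω := by
  have hzero : MeasurableSet[m] {ω | g ω = 0} := hg (measurableSet_singleton 0)
  have hf : f =ᵐ[μ.restrict {ω | g ω = 0}] 0 := (ae_restrict_iff' (hm _ hzero)).2 habs
  have hcond := (ae_restrict_iff' (hm _ hzero)).1 (condExp_ae_eq_restrict_zero hzero hf)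
  filter_upwards [hdrift, hcond] with ω hpos hz
  rcases (hg0 ω).eq_or_lt with h | h
  · simp [hz h.symm, ← h]
  · exact hpos h

lemma integral_le_mul_integral_of_drift [IsFiniteMeasure μ] {f g : Ω → ℝ} {c : ℝ}
    (hm : m ≤ mΩ) (hg : Measurable[m] g) (hg0 : ∀ ω, 0 ≤ g ω) (hgi : Integrable g μ)
    (hdrift : ∀ᵐ ω ∂μ, 0 < g ω → μ[f | m] ω ≤ c * g ω) (habs : ∀ᵐ ω ∂μ, g ω = 0 → f ω = 0) :
    ∫ ω, f ω ∂μ ≤ c * ∫ ω, g ω ∂μ := by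
  rw [← integral_condExp hm, ← integral_const_mul]
  exact integral_mono_ae integrable_condExp (hgi.const_mul c)
    (condExp_le_mul_of_drift hm hg hg0 hdrift habs)

end Drift

lemma lintegral_le_tsum_measure_of_lt_imp_mem {Ω : Type*} {mΩ : MeasurableSpace Ω}
    {μ : Measure Ω} {T : Ω → ℕ∞} {S : ℕ → Set Ω} (hS : ∀ k, MeasurableSet (S k))
    (hT : ∀ ω (k : ℕ), (k : ℕ∞) < T ω → ω ∈ S k) :
    ∫⁻ ω, (T ω : ℝ≥0∞) ∂μ ≤ ∑' k, μ (S k) := by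
  have hpt : ∀ ω, (T ω : ℝ≥0∞) ≤ ∑' k, (S k).indicator 1 ω := fun ω => by
    have hcard : T ω ≤ {k | ω ∈ S k}.encard :=
      ENat.forall_natCast_le_iff_le.mp fun n hn => (Set.Nat.encard_range n).symm.le.trans
        (Set.encard_le_encard fun k hk => hT ω k ((Nat.cast_lt.2 hk).trans_le hn))
    calc (T ω : ℝ≥0∞) ≤ {k | ω ∈ S k}.encard := ENat.toENNReal_le.2 hcard
      _ = ∑' k, (S k).indicator 1 ω := by
        rw [← ENNReal.tsum_set_one, tsum_subtype {k | ω ∈ S k} fun _ => 1]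
        congr 1
  calc ∫⁻ ω, (T ω : ℝ≥0∞) ∂μ ≤ ∫⁻ ω, ∑' k, (S k).indicator 1 ω ∂μ := lintegral_mono hpt
    _ = ∑' k, μ (S k) := by
      rw [lintegral_tsum fun k => (measurable_one.indicator (hS k)).aemeasurable]
      simp only [lintegral_indicator_one (hS _)]

/-- Multiplicative-drift absorption bound: for a nonnegative integer-valued adapted process
with deterministic start `a`, multiplicative drift `𝔼[A_{k+1}|ℱ_k] ≤ (1-Θ)·A_k` on
`{A_k > 0}`, and absorption at `0`, the absorption time `T₀ = inf {k | A_k = 0}` satisfies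
`𝔼[T₀] ≤ (1 + ln(max(1, a))) / Θ`. -/
theorem multiplicative_drift_absorption
    {Ω : Type*} {mΩ : MeasurableSpace Ω} {μ : Measure Ω} [IsProbabilityMeasure μ]
    (ℱ : Filtration ℕ mΩ)
    (A : ℕ → Ω → ℝ)
    (hadapted : Adapted ℱ A)
    (hint : ∀ k, Integrable (A k) μ)
    (hnat : ∀ k ω, ∃ n : ℕ, A k ω = (n : ℝ))
    (a : ℕ) (hA0 : ∀ ω, A 0 ω = (a : ℝ))
    (Θ : ℝ) (hΘ : Θ ∈ Set.Ioc (0 : ℝ) 1)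
    (hdrift : ∀ k, ∀ᵐ ω ∂μ, 0 < A k ω → (μ[A (k + 1) | ℱ k]) ω ≤ (1 - Θ) * A k ω)
    (habs : ∀ k, ∀ᵐ ω ∂μ, A k ω = 0 → A (k + 1) ω = 0)
    (T₀ : Ω → ℕ∞)
    (hT₀ : ∀ ω, T₀ ω = sInf ((fun k : ℕ => (k : ℕ∞)) '' {k : ℕ | A k ω = 0})) :
    ∫⁻ ω, (T₀ ω : ℝ≥0∞) ∂μ ≤ ENNReal.ofReal ((1 + Real.log (max 1 (a : ℝ))) / Θ) := by
  obtain ⟨hΘ0, hΘ1⟩ := hΘ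
  have hA : ∀ k ω, 0 ≤ A k ω ∧ (A k ω ≠ 0 → 1 ≤ A k ω) := fun k ω => by
    obtain ⟨n, hn⟩ := hnat k ω
    rw [hn, Nat.cast_ne_zero, Nat.one_le_cast, Nat.one_le_iff_ne_zero]
    exact ⟨n.cast_nonneg, id⟩
  have hmean : ∀ k, ∫ ω, A k ω ∂μ ≤ max 1 (a : ℝ) * (1 - Θ) ^ k := fun k => by
    have hgeom := le_geom (u := fun k => ∫ ω, A k ω ∂μ) (by linarith) k fun j _ =>
      integral_le_mul_integral_of_drift (ℱ.le j) (hadapted j) (fun ω => (hA j ω).1) (hint j)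
        (hdrift j) (habs j)
    simp only [hA0, integral_const, probReal_univ, smul_eq_mul, one_mul] at hgeom
    calc ∫ ω, A k ω ∂μ ≤ (1 - Θ) ^ k * a := hgeom
      _ ≤ (1 - Θ) ^ k * max 1 (a : ℝ) := by gcongr; exact le_max_right _ _
      _ = max 1 (a : ℝ) * (1 - Θ) ^ k := mul_comm _ _
  have hlive : ∀ ω (k : ℕ), (k : ℕ∞) < T₀ ω → ω ∈ {ω' | A k ω' ≠ 0} := fun ω k hk h0 =>
    (hT₀ ω ▸ hk).not_ge (sInf_le ⟨k, h0, rfl⟩)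
  calc ∫⁻ ω, (T₀ ω : ℝ≥0∞) ∂μ ≤ ∑' k, μ {ω | A k ω ≠ 0} :=
        lintegral_le_tsum_measure_of_lt_imp_mem
          (fun k => ((hadapted k).mono (ℱ.le k) le_rfl (measurableSet_singleton 0)).compl) hlive
    _ ≤ ∑' k, min 1 (ENNReal.ofReal (max 1 (a : ℝ) * (1 - Θ) ^ k)) :=
        ENNReal.tsum_le_tsum fun k => le_min prob_le_one <|
          ((hint k).measure_le_integral (ae_of_all _ fun ω => (hA k ω).1)
            fun ω => (hA k ω).2).trans (ENNReal.ofReal_le_ofReal (hmean k))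
    _ ≤ ENNReal.ofReal ((1 + Real.log (max 1 (a : ℝ))) / (1 - (1 - Θ))) :=
        ENNReal.tsum_min_one_ofReal_mul_pow_le (le_max_left _ _) (by linarith) (by linarith)
    _ = ENNReal.ofReal ((1 + Real.log (max 1 (a : ℝ))) / Θ) := by rw [sub_sub_cancel]
end

section
/- Let (A_k)_{k∈ℕ} be a process of nonnegative integer-valued integrable random variables adapted to the filtration (ℱ_k)_{k∈ℕ}, with deterministic initial value A₀ = a ∈ ℕ, and assume A_{k+1} ≤ A_k almost surely for all k (the attacker count is nonincreasing) and that increments are bounded: |A_{k+1} − A_k| ≤ C almost surely for a constant C < ∞. Let D ≥ 1 be an integer and Θ ∈ (0, 1]. Assume: (i) on {A_k = 0}, A_{k+1} = 0 almost surely; (ii) additive drift in the saturated regime: 𝔼[A_{k+1} | ℱ_k] ≤ A_k − Θ·D almost everywhere on {A_k ≥ D}, for every k; (iii) multiplicative drift in the sub-capacity regime: 𝔼[A_{k+1} | ℱ_k] ≤ (1 − Θ)·A_k almost everywhere on {0 < A_k < D}, for every k. Then the absorption time T₀ = inf{k ≥ 0 : A_k = 0} satisfies 𝔼[T₀] ≤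 max(a − D, 0)/(Θ·D) + (1 + ln(min(D, max(1, a))))/Θ. -/
open MeasureTheory
open scoped ENNReal

/-! Drift argument with a concave potential. Let `c z = max 1 (min z D)` and let `P` be the
potential with `P 0 = 0` whose slope at `z` is `1 / c z`: slope `1` below `1`, `1 / z` on `[1, D]`
(the geometric phase, whence the logarithm) and `1 / D` above `D` (the linear phase). Concavity
gives `P y ≤ P x + (y - x) / c x`, so pulling the `ℱ_k`-measurable factor `1 / c (A_k)` out of the
conditional expectation, `𝔼[P(A_{k+1})] ≤ 𝔼[P(A_k)] + 𝔼[(𝔼[A_{k+1} | ℱ_k] - A_k) / c (A_k)]`.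
On `{A_k ≥ D}` the additive drift `Θ D` is divided by `c = D`, on `{0 < A_k < D}` the
multiplicative drift `Θ A_k` by `c = A_k` (as `A_k ≥ 1` is an integer), so the potential drops by
at least `Θ ℙ(A_k > 0)` at each step. Telescoping gives `Θ ∑ ℙ(A_k > 0) ≤ P a`, and
`𝔼[T₀] = ∑ ℙ(T₀ > k) ≤ ∑ ℙ(A_k > 0)`. -/

lemma ENat.toENNReal_eq_tsum_ite (n : ℕ∞) :
    (n : ℝ≥0∞) = ∑' k : ℕ, if (k : ℕ∞) < n then 1 else 0 := by
  induction n using ENat.recTopCoe with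
  | top => simp
  | coe n =>
    rw [tsum_eq_sum (s := Finset.range n) fun k hk => by simpa using hk]
    simp [Finset.sum_boole, Finset.filter_true_of_mem fun k hk => Finset.mem_range.mp hk]

lemma ENNReal.tsum_le_ofReal_div_of_le_sub {u : ℕ → ℝ≥0∞} (hu : ∀ k, u k ≠ ∞) {V : ℕ → ℝ}
    (hV : ∀ k, 0 ≤ V k) {θ : ℝ} (hθ : 0 < θ) (h : ∀ k, V (k + 1) ≤ V k - θ * (u k).toReal) :
    ∑' k, u k ≤ ENNReal.ofReal (V 0 / θ) := by
  have htelescope : ∀ n, θ * ∑ k ∈ Finset.range n, (u k).toReal ≤ V 0 - V n := by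
    intro n
    induction n with
    | zero => simp
    | succ n ih =>
      rw [Finset.sum_range_succ, mul_add]
      linarith [h n]
  refine ENNReal.tsum_le_of_sum_range_le fun n => ?_
  rw [← ENNReal.ofReal_toReal (ENNReal.sum_ne_top.2 fun k _ => hu k),
    ENNReal.toReal_sum fun k _ => hu k]
  exact ENNReal.ofReal_le_ofReal ((le_div_iff₀' hθ).2 (by linarith [htelescope n, hV n]))

section Measure

variable {Ω : Type*} {m mΩ : MeasurableSpace Ω} {μ : Measure Ω}

lemma lintegral_le_tsum_measure_of_lt {T : Ω → ℕ∞} {S : ℕ → Set Ω}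
    (hS : ∀ k, MeasurableSet (S k)) (hT : ∀ (k : ℕ) ω, (k : ℕ∞) < T ω → ω ∈ S k) :
    ∫⁻ ω, (T ω : ℝ≥0∞) ∂μ ≤ ∑' k, μ (S k) :=
  calc ∫⁻ ω, (T ω : ℝ≥0∞) ∂μ ≤ ∫⁻ ω, ∑' k, (S k).indicator 1 ω ∂μ := by
        refine lintegral_mono fun ω => ?_
        rw [ENat.toENNReal_eq_tsum_ite]
        refine ENNReal.tsum_le_tsum fun k => ?_
        split_ifs with hk
        · rw [Set.indicator_of_mem (hT k ω hk), Pi.one_apply]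
        · exact zero_le
    _ = ∑' k, μ (S k) := by
        rw [lintegral_tsum fun k => (measurable_one.indicator (hS k)).aemeasurable]
        simp only [lintegral_indicator_one (hS _)]

lemma integral_mul_condExp_of_stronglyMeasurable [IsFiniteMeasure μ] (hm : m ≤ mΩ)
    {f g : Ω → ℝ} (hf : StronglyMeasurable[m] f) (hfg : Integrable (f * g) μ)
    (hg : Integrable g μ) : ∫ ω, f ω * (μ[g | m]) ω ∂μ = ∫ ω, f ω * g ω ∂μ :=
  calc ∫ ω, f ω * (μ[g | m]) ω ∂μ = ∫ ω, (μ[f * g | m]) ω ∂μ :=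
        integral_congr_ae (condExp_mul_of_stronglyMeasurable_left hf hfg hg).symm
    _ = ∫ ω, f ω * g ω ∂μ := integral_condExp hm

theorem integral_comp_le_add_integral_mul_condExp_sub [IsFiniteMeasure μ] (hm : m ≤ mΩ)
    {φ g : ℝ → ℝ} (hφg : ∀ x y, φ y ≤ φ x + g x * (y - x)) (hg : Continuous g) {M : ℝ}
    (hgM : ∀ x, ‖g x‖ ≤ M) {X Y : Ω → ℝ} (hX : StronglyMeasurable[m] X)
    (hXi : Integrable X μ) (hYi : Integrable Y μ)
    (hφX : Integrable (fun ω => φ (X ω)) μ) (hφY : Integrable (fun ω => φ (Y ω)) μ) :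
    ∫ ω, φ (Y ω) ∂μ ≤ ∫ ω, φ (X ω) ∂μ + ∫ ω, g (X ω) * ((μ[Y | m]) ω - X ω) ∂μ := by
  have hgX : StronglyMeasurable[m] (fun ω => g (X ω)) := hg.comp_stronglyMeasurable hX
  have hgX' : AEStronglyMeasurable (fun ω => g (X ω)) μ :=
    (hgX.mono hm).aestronglyMeasurable
  have hbdd : ∀ᵐ ω ∂μ, ‖g (X ω)‖ ≤ M := Filter.Eventually.of_forall fun _ => hgM _
  have hgXY : Integrable (fun ω => g (X ω) * Y ω) μ := hYi.bdd_mul hgX' hbdd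
  have hgXX : Integrable (fun ω => g (X ω) * X ω) μ := hXi.bdd_mul hgX' hbdd
  have hdiff : Integrable (fun ω => g (X ω) * Y ω - g (X ω) * X ω) μ := hgXY.sub hgXX
  have hgXE : Integrable (fun ω => g (X ω) * (μ[Y | m]) ω) μ :=
    integrable_condExp.bdd_mul hgX' hbdd
  calc ∫ ω, φ (Y ω) ∂μ ≤ ∫ ω, (φ (X ω) + (g (X ω) * Y ω - g (X ω) * X ω)) ∂μ :=
        integral_mono hφY (hφX.add hdiff) fun ω => by
          simpa only [mul_sub] using hφg (X ω) (Y ω)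
    _ = ∫ ω, φ (X ω) ∂μ + (∫ ω, g (X ω) * (μ[Y | m]) ω ∂μ - ∫ ω, g (X ω) * X ω ∂μ) := by
        rw [integral_add hφX hdiff, integral_sub hgXY hgXX,
          integral_mul_condExp_of_stronglyMeasurable hm hgX hgXY hYi]
    _ = ∫ ω, φ (X ω) ∂μ + ∫ ω, g (X ω) * ((μ[Y | m]) ω - X ω) ∂μ := by
        simp only [mul_sub]
        rw [integral_sub hgXE hgXX]

end Measure

noncomputable def mixedPotential (D z : ℝ) : ℝ :=
  min z 1 + Real.log (max 1 (min z D)) + max (z - D) 0 / D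

noncomputable def mixedPotentialSlope (D x : ℝ) : ℝ :=
  (max 1 (min x D))⁻¹

section Potential

variable {D : ℝ}

lemma min_one_add_max_one_min_add_max_sub (hD : 1 ≤ D) (z : ℝ) :
    min z 1 + (max 1 (min z D) - 1) + max (z - D) 0 = z := by
  rcases le_total z 1 with h1 | h1
  · rw [min_eq_left h1, min_eq_left (h1.trans hD), max_eq_left h1,
      max_eq_right (by linarith : z - D ≤ 0)]
    ring
  rcases le_total z D with h2 | h2
  · rw [min_eq_right h1, min_eq_left h2, max_eq_right h1, max_eq_right (by linarith : z - D ≤ 0)]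
    ring
  · rw [min_eq_right h1, min_eq_right h2, max_eq_right hD, max_eq_left (by linarith : 0 ≤ z - D)]
    ring

lemma mixedPotentialSlope_pos (D x : ℝ) : 0 < mixedPotentialSlope D x :=
  inv_pos.mpr (one_pos.trans_le (le_max_left _ _))

lemma norm_mixedPotentialSlope_le_one (D x : ℝ) : ‖mixedPotentialSlope D x‖ ≤ 1 := by
  rw [Real.norm_of_nonneg (mixedPotentialSlope_pos D x).le]
  exact inv_le_one_of_one_le₀ (le_max_left _ _)

lemma continuous_mixedPotentialSlope (D : ℝ) : Continuous (mixedPotentialSlope D) :=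
  (continuous_const.max (continuous_id.min continuous_const)).inv₀
    fun _ => (one_pos.trans_le (le_max_left _ _)).ne'

/-- The increments of the three summands add up to `y - x`, and each is at most its share of
`y - x` weighted by `1 / c x`: the outer two because `1 ≤ c x ≤ D` and their slopes change exactly
where `c x` leaves `1` resp. reaches `D`, the logarithm by `log t ≤ t - 1`. -/
lemma mixedPotential_le_add_slope_mul (hD : 1 ≤ D) (x y : ℝ) :
    mixedPotential D y ≤ mixedPotential D x + mixedPotentialSlope D x * (y - x) := by
  unfold mixedPotential mixedPotentialSlope
  set c := max 1 (min x D) with hc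
  set d := max 1 (min y D)
  have hc0 : 0 < c := one_pos.trans_le (le_max_left _ _)
  have hd0 : 0 < d := one_pos.trans_le (le_max_left _ _)
  have hcD : c ≤ D := max_le hD (min_le_right _ _)
  have hlin : min y 1 - min x 1 ≤ (min y 1 - min x 1) / c := by
    rcases le_or_gt (min y 1) (min x 1) with h | h
    · rw [le_div_iff₀ hc0]
      nlinarith [le_max_left 1 (min x D)]
    · have hx1 : x < 1 := lt_of_not_ge fun hx => by
        rw [min_eq_right hx] at h
        exact (min_le_right y 1).not_gt h
      rw [hc, min_eq_left (hx1.le.trans hD), max_eq_left hx1.le, div_one]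
  have hlog : Real.log d - Real.log c ≤ (d - c) / c := by
    have h := Real.log_le_sub_one_of_pos (div_pos hd0 hc0)
    rw [Real.log_div hd0.ne' hc0.ne', div_sub_one hc0.ne'] at h
    exact h
  have htail : (max (y - D) 0 - max (x - D) 0) / D ≤ (max (y - D) 0 - max (x - D) 0) / c := by
    rcases le_or_gt (max (x - D) 0) (max (y - D) 0) with h | h
    · exact div_le_div_of_nonneg_left (by linarith) hc0 hcD
    · have hxD : D < x := lt_of_not_ge fun hx => by
        rw [max_eq_right (by linarith : x - D ≤ 0)] at h
        exact (le_max_right (y - D) 0).not_gt h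
      rw [hc, min_eq_right hxD.le, max_eq_right hD]
  have hsum : (min y 1 - min x 1) + (d - c) + (max (y - D) 0 - max (x - D) 0) = y - x := by
    linarith [min_one_add_max_one_min_add_max_sub hD x, min_one_add_max_one_min_add_max_sub hD y]
  have hsplit : (min y 1 - min x 1) / c + (d - c) / c + (max (y - D) 0 - max (x - D) 0) / c
      = c⁻¹ * (y - x) := by
    rw [← add_div, ← add_div, hsum, div_eq_inv_mul]
  rw [sub_div] at htail
  linarith

lemma mixedPotential_nonneg (hD : 1 ≤ D) {z : ℝ} (hz : 0 ≤ z) : 0 ≤ mixedPotential D z := by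
  unfold mixedPotential
  have := Real.log_nonneg (le_max_left 1 (min z D))
  have := div_nonneg (le_max_right (z - D) 0) (by linarith : 0 ≤ D)
  have := le_min hz zero_le_one
  linarith

lemma mixedPotential_le_self (hD : 1 ≤ D) (z : ℝ) : mixedPotential D z ≤ z := by
  have h := mixedPotential_le_add_slope_mul hD 0 z
  have h0 : mixedPotential D 0 = 0 := by
    simp [mixedPotential, min_eq_left (by linarith : (0 : ℝ) ≤ D),
      max_eq_right (by linarith : -D ≤ 0)]
  have h1 : mixedPotentialSlope D 0 = 1 := by
    simp [mixedPotentialSlope, min_eq_left (by linarith : (0 : ℝ) ≤ D)]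
  rw [h0, h1] at h
  linarith

lemma continuous_mixedPotential (D : ℝ) : Continuous (mixedPotential D) := by
  have hc : Continuous fun z : ℝ => max 1 (min z D) :=
    continuous_const.max (continuous_id.min continuous_const)
  exact ((continuous_id.min continuous_const).add
    (hc.log fun z => (one_pos.trans_le (le_max_left _ _)).ne')).add
    (((continuous_id.sub continuous_const).max continuous_const).div_const _)

lemma mixedPotential_le (hD : 1 ≤ D) (z : ℝ) :
    mixedPotential D z ≤ 1 + Real.log (min D (max 1 z)) + max (z - D) 0 / D := by
  rw [mixedPotential, max_min_distrib_left, max_eq_right hD, min_comm (max 1 z) D]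
  linarith [min_le_right z 1]

lemma mixedPotentialSlope_mul_sub_le {Θ x e : ℝ} (hD : 1 ≤ D) (hx : 1 ≤ x)
    (hadd : D ≤ x → e ≤ x - Θ * D) (hmul : x < D → e ≤ (1 - Θ) * x) :
    mixedPotentialSlope D x * (e - x) ≤ -Θ := by
  unfold mixedPotentialSlope
  rcases lt_or_ge x D with hxD | hxD
  · rw [min_eq_left hxD.le, max_eq_right hx, inv_mul_le_iff₀ (by linarith)]
    linarith [hmul hxD]
  · rw [min_eq_right hxD, max_eq_right hD, inv_mul_le_iff₀ (by linarith)]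
    linarith [hadd hxD]

end Potential

section MixedPotential

variable {Ω : Type*} {m mΩ : MeasurableSpace Ω} {μ : Measure Ω}

lemma integrable_mixedPotential_comp {D : ℝ} (hD : 1 ≤ D) {X : Ω → ℝ} (hXi : Integrable X μ)
    (hX : ∀ ω, 0 ≤ X ω) : Integrable (fun ω => mixedPotential D (X ω)) μ := by
  refine hXi.mono ((continuous_mixedPotential D).comp_aestronglyMeasurable
    hXi.aestronglyMeasurable) (Filter.Eventually.of_forall fun ω => ?_)
  rw [Real.norm_eq_abs, Real.norm_eq_abs, abs_of_nonneg (mixedPotential_nonneg hD (hX ω)),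
    abs_of_nonneg (hX ω)]
  exact mixedPotential_le_self hD _

theorem integral_mixedPotential_le_sub [IsFiniteMeasure μ] (hm : m ≤ mΩ) {D Θ : ℝ} (hD : 1 ≤ D)
    {X Y : Ω → ℝ} (hX : StronglyMeasurable[m] X) (hXi : Integrable X μ) (hYi : Integrable Y μ)
    (hXnat : ∀ ω, ∃ n : ℕ, X ω = n) (hY : ∀ ω, 0 ≤ Y ω) (hYX : ∀ᵐ ω ∂μ, Y ω ≤ X ω)
    (hadd : ∀ᵐ ω ∂μ, D ≤ X ω → (μ[Y | m]) ω ≤ X ω - Θ * D)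
    (hmul : ∀ᵐ ω ∂μ, 0 < X ω → X ω < D → (μ[Y | m]) ω ≤ (1 - Θ) * X ω) :
    ∫ ω, mixedPotential D (Y ω) ∂μ ≤
      ∫ ω, mixedPotential D (X ω) ∂μ - Θ * μ.real {ω | 0 < X ω} := by
  have hX0 : ∀ ω, 0 ≤ X ω := fun ω => by
    obtain ⟨n, hn⟩ := hXnat ω
    exact hn ▸ n.cast_nonneg
  have hpos : MeasurableSet {ω | 0 < X ω} :=
    measurableSet_lt measurable_const (hX.mono hm).measurable
  have hEX : ∀ᵐ ω ∂μ, (μ[Y | m]) ω ≤ X ω := by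
    have h := condExp_mono (m := m) hYi hXi hYX
    rwa [condExp_of_stronglyMeasurable hm hX hXi] at h
  have hloss : ∀ᵐ ω ∂μ, mixedPotentialSlope D (X ω) * ((μ[Y | m]) ω - X ω) ≤
      -{ω | 0 < X ω}.indicator (fun _ => Θ) ω := by
    filter_upwards [hEX, hadd, hmul] with ω hE hadd hmul
    obtain ⟨n, hn⟩ := hXnat ω
    rcases n.eq_zero_or_pos with rfl | hn0
    · have hω : ω ∉ {ω | 0 < X ω} := by simp [hn]
      rw [Set.indicator_of_notMem hω, neg_zero]
      exact mul_nonpos_of_nonneg_of_nonpos (mixedPotentialSlope_pos D _).le (by linarith)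
    · have h1 : 1 ≤ X ω := hn ▸ Nat.one_le_cast.2 hn0
      have hω : ω ∈ {ω | 0 < X ω} := show 0 < X ω by linarith
      rw [Set.indicator_of_mem hω]
      exact mixedPotentialSlope_mul_sub_le hD h1 hadd (hmul (by linarith))
  have hslope : AEStronglyMeasurable (fun ω => mixedPotentialSlope D (X ω)) μ :=
    ((continuous_mixedPotentialSlope D).comp_stronglyMeasurable (hX.mono hm)).aestronglyMeasurable
  have hslope_le : ∀ᵐ ω ∂μ, ‖mixedPotentialSlope D (X ω)‖ ≤ 1 :=
    Filter.Eventually.of_forall fun _ => norm_mixedPotentialSlope_le_one D _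
  calc ∫ ω, mixedPotential D (Y ω) ∂μ ≤ ∫ ω, mixedPotential D (X ω) ∂μ +
        ∫ ω, mixedPotentialSlope D (X ω) * ((μ[Y | m]) ω - X ω) ∂μ :=
        integral_comp_le_add_integral_mul_condExp_sub hm (mixedPotential_le_add_slope_mul hD)
          (continuous_mixedPotentialSlope D) (norm_mixedPotentialSlope_le_one D) hX hXi hYi (integrable_mixedPotential_comp hD hXi hX0)
          (integrable_mixedPotential_comp hD hYi hY)
    _ ≤ ∫ ω, mixedPotential D (X ω) ∂μ + ∫ ω, -{ω | 0 < X ω}.indicator (fun _ => Θ) ω ∂μ :=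
        add_le_add le_rfl (integral_mono_ae ((integrable_condExp.sub hXi).bdd_mul hslope hslope_le)
          ((integrable_const Θ).indicator hpos).neg hloss)
    _ = ∫ ω, mixedPotential D (X ω) ∂μ - Θ * μ.real {ω | 0 < X ω} := by
        rw [integral_neg, integral_indicator_const Θ hpos, smul_eq_mul, mul_comm, sub_eq_add_neg]

end MixedPotential

theorem mixed_linear_geometric_absorption_bound_general
    {Ω : Type*} {mΩ : MeasurableSpace Ω} {μ : Measure Ω} [IsProbabilityMeasure μ]
    (ℱ : Filtration ℕ mΩ)
    (A : ℕ → Ω → ℝ)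
    (hadapted : Adapted ℱ A)
    (hint : ∀ k, Integrable (A k) μ)
    (hnat : ∀ k ω, ∃ n : ℕ, A k ω = (n : ℝ))
    (a : ℕ) (hA0 : ∀ ω, A 0 ω = (a : ℝ))
    (hmono : ∀ k, ∀ᵐ ω ∂μ, A (k + 1) ω ≤ A k ω)
    (D : ℕ) (hD : 1 ≤ D)
    (Θ : ℝ) (hΘ : Θ ∈ Set.Ioc (0 : ℝ) 1)
    (hdriftadd : ∀ k, ∀ᵐ ω ∂μ, (D : ℝ) ≤ A k ω →
      (μ[A (k + 1) | ℱ k]) ω ≤ A k ω - Θ * (D : ℝ))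
    (hdriftmul : ∀ k, ∀ᵐ ω ∂μ, 0 < A k ω → A k ω < (D : ℝ) →
      (μ[A (k + 1) | ℱ k]) ω ≤ (1 - Θ) * A k ω)
    (T₀ : Ω → ℕ∞)
    (hT₀ : ∀ ω, T₀ ω = sInf ((fun k : ℕ => (k : ℕ∞)) '' {k : ℕ | A k ω = 0})) :
    ∫⁻ ω, (T₀ ω : ℝ≥0∞) ∂μ ≤
      ENNReal.ofReal (max ((a : ℝ) - (D : ℝ)) 0 / (Θ * (D : ℝ)) +
        (1 + Real.log (min (D : ℝ) (max 1 (a : ℝ)))) / Θ) := by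
  have hD1 : (1 : ℝ) ≤ D := by exact_mod_cast hD
  have hA_nonneg : ∀ k ω, 0 ≤ A k ω := fun k ω => by
    obtain ⟨n, hn⟩ := hnat k ω
    exact hn ▸ n.cast_nonneg
  have hdrift : ∀ k, ∫ ω, mixedPotential D (A (k + 1) ω) ∂μ ≤
      ∫ ω, mixedPotential D (A k ω) ∂μ - Θ * (μ {ω | 0 < A k ω}).toReal := fun k =>
    integral_mixedPotential_le_sub (ℱ.le k) hD1 (hadapted k).stronglyMeasurable (hint k)
      (hint (k + 1)) (hnat k) (hA_nonneg (k + 1)) (hmono k) (hdriftadd k) (hdriftmul k)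
  have hstart : ∫ ω, mixedPotential D (A 0 ω) ∂μ = mixedPotential D a := by
    simp only [hA0, integral_const, probReal_univ, one_smul]
  calc ∫⁻ ω, (T₀ ω : ℝ≥0∞) ∂μ ≤ ∑' k, μ {ω | 0 < A k ω} :=
        lintegral_le_tsum_measure_of_lt
          (fun k => measurableSet_lt measurable_const ((hadapted k).mono (ℱ.le k) le_rfl))
          fun k ω hk => (hA_nonneg k ω).lt_of_ne' fun h0 => hk.not_ge <| by
            rw [hT₀]
            exact sInf_le ⟨k, h0, rfl⟩
    _ ≤ ENNReal.ofReal (mixedPotential D a / Θ) := hstart ▸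
        ENNReal.tsum_le_ofReal_div_of_le_sub (fun _ => measure_ne_top _ _)
          (fun k => integral_nonneg fun ω => mixedPotential_nonneg hD1 (hA_nonneg k ω)) hΘ.1 hdrift
    _ ≤ _ := ENNReal.ofReal_le_ofReal <| by
        calc mixedPotential D a / Θ ≤
              (1 + Real.log (min (D : ℝ) (max 1 (a : ℝ))) + max ((a : ℝ) - D) 0 / D) / Θ :=
            div_le_div_of_nonneg_right (mixedPotential_le hD1 a) hΘ.1.le
          _ = _ := by ring

/-- Explicit mixed linear–geometric absorption bound: for a nonnegative integer-valued,
nonincreasing adapted process with deterministic start `a`, bounded increments, absorption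
at `0`, additive drift `𝔼[A_{k+1}|ℱ_k] ≤ A_k - Θ·D` on `{A_k ≥ D}`, and multiplicative
drift `𝔼[A_{k+1}|ℱ_k] ≤ (1-Θ)·A_k` on `{0 < A_k < D}`, the absorption time satisfies
`𝔼[T₀] ≤ max(a - D, 0)/(Θ·D) + (1 + ln(min(D, max(1, a))))/Θ`. -/
theorem mixed_linear_geometric_absorption_bound
    {Ω : Type*} {mΩ : MeasurableSpace Ω} {μ : Measure Ω} [IsProbabilityMeasure μ]
    (ℱ : Filtration ℕ mΩ)
    (A : ℕ → Ω → ℝ)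
    (hadapted : Adapted ℱ A)
    (hint : ∀ k, Integrable (A k) μ)
    (hnat : ∀ k ω, ∃ n : ℕ, A k ω = (n : ℝ))
    (a : ℕ) (hA0 : ∀ ω, A 0 ω = (a : ℝ))
    (hmono : ∀ k, ∀ᵐ ω ∂μ, A (k + 1) ω ≤ A k ω)
    (C : ℝ) (hbdd : ∀ k, ∀ᵐ ω ∂μ, |A (k + 1) ω - A k ω| ≤ C)
    (D : ℕ) (hD : 1 ≤ D)
    (Θ : ℝ) (hΘ : Θ ∈ Set.Ioc (0 : ℝ) 1)
    (habs : ∀ k, ∀ᵐ ω ∂μ, A k ω = 0 → A (k + 1) ω = 0)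
    (hdriftadd : ∀ k, ∀ᵐ ω ∂μ, (D : ℝ) ≤ A k ω →
      (μ[A (k + 1) | ℱ k]) ω ≤ A k ω - Θ * (D : ℝ))
    (hdriftmul : ∀ k, ∀ᵐ ω ∂μ, 0 < A k ω → A k ω < (D : ℝ) →
      (μ[A (k + 1) | ℱ k]) ω ≤ (1 - Θ) * A k ω)
    (T₀ : Ω → ℕ∞)
    (hT₀ : ∀ ω, T₀ ω = sInf ((fun k : ℕ => (k : ℕ∞)) '' {k : ℕ | A k ω = 0})) :
    ∫⁻ ω, (T₀ ω : ℝ≥0∞) ∂μ ≤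
      ENNReal.ofReal (max ((a : ℝ) - (D : ℝ)) 0 / (Θ * (D : ℝ)) +
        (1 + Real.log (min (D : ℝ) (max 1 (a : ℝ)))) / Θ) :=
  mixed_linear_geometric_absorption_bound_general ℱ A hadapted hint hnat a hA0 hmono D hD Θ hΘ
    hdriftadd hdriftmul T₀ hT₀
end
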